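/- arXiv:2001.09168 — 6 statements merged into one kernel-verified Lean document; each statement's English description precedes it below -/
import Mathlib

section
/- Let G be a connected graph of diameter D with a resolving set W = {w_1,...,w_k}. Then the map φ sending each vertex x to the tuple (d_G(w_1,x),...,d_G(w_k,x)) is an injective graph homomorphism (embedding) of G into the strong product of k copies of the path P_{D+1} on vertices {0,...,D}. -/
open SimpleGraph

/-- `W` is a resolving set for `G`: vertices with equal distance vectors to `W` are equal. -/
def IsResolvingSet {V : Type*} (G : SimpleGraph V) (W : Set V) : Prop :=
  ∀ u v : V, (∀ w ∈ W, G.dist w u = G.dist w v) → u = v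

/-- The metric dimension of `G`: the least cardinality of a resolving set. -/
noncomputable def metricDim {V : Type*} [Fintype V] (G : SimpleGraph V) : ℕ :=
  sInf {n | ∃ W : Finset V, W.card = n ∧ IsResolvingSet G ↑W}

/-- The threshold dimension of `G`: the least metric dimension over spanning supergraphs. -/
noncomputable def thresholdDim {V : Type*} [Fintype V] (G : SimpleGraph V) : ℕ :=
  sInf {n | ∃ H : SimpleGraph V, G ≤ H ∧ metricDim H = n}

/-- The strong product of `k` copies of the path on `{0, …, n-1}`. -/
def strongPow (n k : ℕ) : SimpleGraph (Fin k → Fin n) where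
  Adj x y := x ≠ y ∧ ∀ i, ((x i : ℤ) - (y i : ℤ)).natAbs ≤ 1
  symm := by
    constructor
    rintro x y ⟨h1, h2⟩
    refine ⟨fun h => h1 h.symm, fun i => ?_⟩
    rw [show (y i : ℤ) - (x i : ℤ) = -((x i : ℤ) - (y i : ℤ)) by ring, Int.natAbs_neg]
    exact h2 i
  loopless := ⟨fun x ⟨h, _⟩ => h rfl⟩

lemma IsResolvingSet.injective_dist {V ι : Type*} {G : SimpleGraph V} {w : ι → V}
    (hres : IsResolvingSet G (Set.range w)) : Function.Injective fun x i => G.dist (w i) x :=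
  fun u v huv => hres u v <| by
    rintro _ ⟨i, rfl⟩
    exact congrFun huv i

/-- If `x` cannot reach `u`, it cannot reach `v` either, and both distances are the junk
value `0`. -/
lemma SimpleGraph.Adj.natAbs_sub_dist_le_one {V : Type*} {G : SimpleGraph V} {u v : V}
    (huv : G.Adj u v) (x : V) : ((G.dist x u : ℤ) - G.dist x v).natAbs ≤ 1 := by
  rcases huv.diff_dist_adj (u := x) with h | h | h <;> omega

theorem distanceVector_embedding_general {V : Type*} (G : SimpleGraph V) (D k : ℕ)
    (w : Fin k → V) (hres : IsResolvingSet G (Set.range w))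
    (φ : V → (Fin k → Fin (D + 1)))
    (hφ : ∀ (x : V) (i : Fin k), (φ x i : ℕ) = G.dist (w i) x) :
    Function.Injective φ ∧
      ∀ u v : V, G.Adj u v → (strongPow (D + 1) k).Adj (φ u) (φ v) := by
  have hinj : Function.Injective φ := fun u v huv =>
    hres.injective_dist <| funext fun i => by simp only [← hφ, huv]
  refine ⟨hinj, fun u v huv => ⟨hinj.ne huv.ne, fun i => ?_⟩⟩
  rw [hφ u i, hφ v i]
  exact huv.natAbs_sub_dist_le_one (w i)

/-- The distance-vector map of a connected graph with resolving set `{w 1, …, w k}`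
is an embedding into the strong product of `k` copies of `P (D+1)`. -/
theorem distanceVector_embedding {V : Type*} [Fintype V] (G : SimpleGraph V)
    (hG : G.Connected) (D k : ℕ) (hD : G.diam = D)
    (w : Fin k → V) (hw : Function.Injective w)
    (hres : IsResolvingSet G (Set.range w))
    (φ : V → (Fin k → Fin (D + 1)))
    (hφ : ∀ (x : V) (i : Fin k), (φ x i : ℕ) = G.dist (w i) x) :
    Function.Injective φ ∧
      ∀ u v : V, G.Adj u v → (strongPow (D + 1) k).Adj (φ u) (φ v) :=
  distanceVector_embedding_general G D k w hres φ hφ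
end

section
/- Let G be a connected graph of diameter D with resolving set W = {w_1,...,w_k}, and let φ(x) = (d_G(w_1,x),...,d_G(w_k,x)). Then for every i and every vertex x, the distance in the subgraph of P_{D+1}^{⊠,k} induced by φ(V(G)) between φ(w_i) and φ(x) equals d_G(w_i,x). -/
open SimpleGraph

/-
A resolving set makes `φ` injective, and adjacent vertices of `G` have distance
vectors differing by at most one in each coordinate, so `φ` is a graph homomorphism from `G`
into the induced subgraph and distances can only shrink. Conversely, along any walk in the
strong product a coordinate changes by at most one per step, and the `i`-th coordinates of
`φ (w i)` and `φ x` are `0` and `d(w i, x)`.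
-/

namespace SimpleGraph

variable {V W : Type*} {G : SimpleGraph V} {G' : SimpleGraph W} {u v : V}

lemma Walk.natAbs_sub_le_length {f : V → ℤ} (hf : ∀ a b, G.Adj a b → (f a - f b).natAbs ≤ 1)
    (p : G.Walk u v) : (f u - f v).natAbs ≤ p.length := by
  induction p with
  | nil => simp
  | @cons a b c hab _ ih =>
    calc (f a - f c).natAbs ≤ (f a - f b).natAbs + (f b - f c).natAbs := by
          simpa using Int.natAbs_add_le (f a - f b) (f b - f c)
      _ ≤ _ := by grind [Walk.length_cons]

lemma Reachable.natAbs_sub_le_dist {f : V → ℤ}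
    (hf : ∀ a b, G.Adj a b → (f a - f b).natAbs ≤ 1) (h : G.Reachable u v) :
    (f u - f v).natAbs ≤ G.dist u v := by
  obtain ⟨p, hp⟩ := h.exists_walk_length_eq_dist
  exact hp ▸ p.natAbs_sub_le_length hf

lemma Adj.natAbs_dist_sub_dist_le_one {a b : V} (h : G.Adj a b) (u : V) :
    ((G.dist u a : ℤ) - G.dist u b).natAbs ≤ 1 := by
  grind [h.diff_dist_adj (u := u)]

lemma Hom.dist_map_le (f : G →g G') (h : G.Reachable u v) :
    G'.dist (f u) (f v) ≤ G.dist u v := by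
  obtain ⟨p, hp⟩ := h.exists_walk_length_eq_dist
  simpa [hp] using dist_le (p.map f)

def Hom.rangeRestrict (f : G →g G') : G →g G'.induce (Set.range f) where
  toFun v := ⟨f v, Set.mem_range_self v⟩
  map_rel' h := f.map_adj h

end SimpleGraph

lemma strongPow_adj_iff {n k : ℕ} {x y : Fin k → Fin n} :
    (strongPow n k).Adj x y ↔ x ≠ y ∧ ∀ i, ((x i : ℤ) - (y i : ℤ)).natAbs ≤ 1 :=
  Iff.rfl

section DistanceVector

variable {V : Type*} {G : SimpleGraph V} {k n : ℕ} {w : Fin k → V} {φ : V → Fin k → Fin n}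

lemma IsResolvingSet.injective_of_coe_eq_dist (hres : IsResolvingSet G (Set.range w))
    (hφ : ∀ x i, (φ x i : ℕ) = G.dist (w i) x) : Function.Injective φ := by
  intro a b hab
  refine hres a b ?_
  rintro _ ⟨i, rfl⟩
  rw [← hφ a i, ← hφ b i, hab]

lemma strongPow_adj_of_coe_eq_dist (hφ_inj : Function.Injective φ)
    (hφ : ∀ x i, (φ x i : ℕ) = G.dist (w i) x) {a b : V} (h : G.Adj a b) :
    (strongPow n k).Adj (φ a) (φ b) := by
  refine strongPow_adj_iff.2 ⟨hφ_inj.ne h.ne, fun i => ?_⟩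
  simpa only [hφ] using h.natAbs_dist_sub_dist_le_one (w i)

end DistanceVector

theorem distanceVector_resolved_general {V : Type*} (G : SimpleGraph V)
    (hG : G.Connected) (D k : ℕ)
    (w : Fin k → V)
    (hres : IsResolvingSet G (Set.range w))
    (φ : V → (Fin k → Fin (D + 1)))
    (hφ : ∀ (x : V) (i : Fin k), (φ x i : ℕ) = G.dist (w i) x) :
    ∀ (i : Fin k) (x : V),
      ((strongPow (D + 1) k).induce (Set.range φ)).dist
          ⟨φ (w i), Set.mem_range_self _⟩ ⟨φ x, Set.mem_range_self _⟩ = G.dist (w i) x := by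
  intro i x
  let f : G →g strongPow (D + 1) k :=
    ⟨φ, strongPow_adj_of_coe_eq_dist (hres.injective_of_coe_eq_dist hφ) hφ⟩
  have hreach : G.Reachable (w i) x := hG (w i) x
  refine le_antisymm (f.rangeRestrict.dist_map_le hreach) ?_
  have hcoord := (hreach.map f.rangeRestrict).natAbs_sub_le_dist
    (f := fun y : Set.range φ => (y.1 i : ℤ)) fun _ _ hab => (strongPow_adj_iff.1 hab).2 i
  simpa [f, Hom.rangeRestrict, hφ] using hcoord

/-- The distance-vector embedding is `W`-resolved: distances from `φ (w i)` to `φ x` in the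
subgraph induced by the image equal the corresponding distances in `G`. -/
theorem distanceVector_resolved {V : Type*} [Fintype V] (G : SimpleGraph V)
    (hG : G.Connected) (D k : ℕ) (hD : G.diam = D)
    (w : Fin k → V) (hw : Function.Injective w)
    (hres : IsResolvingSet G (Set.range w))
    (φ : V → (Fin k → Fin (D + 1)))
    (hφ : ∀ (x : V) (i : Fin k), (φ x i : ℕ) = G.dist (w i) x) :
    ∀ (i : Fin k) (x : V),
      ((strongPow (D + 1) k).induce (Set.range φ)).dist
          ⟨φ (w i), Set.mem_range_self _⟩ ⟨φ x, Set.mem_range_self _⟩ = G.dist (w i) x :=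
  distanceVector_resolved_general G hG D k w hres φ hφ
end

section
/- Let G be a connected graph of diameter D and W ⊆ V(G) with |W| = k. Then W is a resolving set for some graph H containing G as a spanning subgraph if and only if there exists a W-resolved embedding of G in the strong product of k copies of P_{D+1}. -/
open SimpleGraph

/-!
If `range w` resolves a spanning supergraph `H` of `G`, the distance vectors
`x ↦ (dist_H (w i) x)ᵢ` form an injective map `φ` into `[0, D]^k` that sends `H`-edges to edges
of the strong product. In the graph pulled back from the strong product along `φ`, which
contains `H`, the `i`-th coordinate is still the distance to `w i`: it is at most `dist_H`,
and at least it, since a coordinate moves by at most one along an edge and vanishes at `w i`.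
Conversely, along a `W`-resolved embedding `φ` the pulled-back graph is isomorphic to the
induced subgraph on `range φ`, so its distances to `W` are the coordinates of the injective `φ`.
-/

namespace SimpleGraph

variable {α β : Type*} {G : SimpleGraph α} {G' : SimpleGraph β}

theorem Hom.edist_le (f : G →g G') (u v : α) : G'.edist (f u) (f v) ≤ G.edist u v :=
  le_iInf fun p => (SimpleGraph.edist_le (p.map f)).trans_eq (by rw [Walk.length_map])

theorem Iso.edist_eq (e : G ≃g G') (u v : α) : G'.edist (e u) (e v) = G.edist u v :=
  le_antisymm (e.toHom.edist_le u v) (by simpa using e.symm.toHom.edist_le (e u) (e v))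

theorem Iso.dist_eq (e : G ≃g G') (u v : α) : G'.dist (e u) (e v) = G.dist u v := by
  rw [dist, dist, e.edist_eq]

theorem dist_comap_eq_dist_induce_range {φ : α → β} (hφ : φ.Injective) (K : SimpleGraph β)
    (u v : α) :
    (K.comap φ).dist u v =
      (K.induce (Set.range φ)).dist ⟨φ u, Set.mem_range_self u⟩ ⟨φ v, Set.mem_range_self v⟩ :=
  ((Embedding.comap ⟨φ, hφ⟩ K).isoInduceRange.dist_eq u v).symm

theorem Connected.dist_le_diam [Finite α] (hG : G.Connected) (u v : α) :
    G.dist u v ≤ G.diam :=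
  have := hG.nonempty
  SimpleGraph.dist_le_diam (G.connected_iff_ediam_ne_top.mp hG)

theorem Adj.natAbs_sub_dist_le_one_s3 {u v : α} (h : G.Adj u v) (w : α) :
    ((G.dist w u : ℤ) - G.dist w v).natAbs ≤ 1 := by
  rcases h.diff_dist_adj (u := w) with h | h | h <;> omega

end SimpleGraph

theorem isResolvingSet_range_iff {V ι : Type*} {H : SimpleGraph V} {w : ι → V} :
    IsResolvingSet H (Set.range w) ↔ Function.Injective fun x i => H.dist (w i) x := by
  simp only [IsResolvingSet, Set.forall_mem_range, Function.Injective, funext_iff]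

namespace strongPow

variable {n k : ℕ}

theorem natAbs_sub_le_length {a b : Fin k → Fin n} (p : (strongPow n k).Walk a b) (i : Fin k) :
    ((a i : ℤ) - b i).natAbs ≤ p.length := by
  induction p with
  | nil => simp
  | cons h _ ih =>
    have := h.2 i
    rw [Walk.length_cons]
    omega

theorem natAbs_sub_le_edist (a b : Fin k → Fin n) (i : Fin k) :
    (((a i : ℤ) - b i).natAbs : ℕ∞) ≤ (strongPow n k).edist a b :=
  le_iInf fun p => by exact_mod_cast natAbs_sub_le_length p i

theorem dist_comap_eq_of_le {V : Type*} {H : SimpleGraph V} (hH : H.Connected)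
    {φ : V → Fin k → Fin n} (hle : H ≤ (strongPow n k).comap φ) {w : Fin k → V}
    (hφ : ∀ x i, (φ x i : ℕ) = H.dist (w i) x) (x : V) (i : Fin k) :
    ((strongPow n k).comap φ).dist (w i) x = φ x i := by
  have hanchor : (φ (w i) i : ℕ) = 0 := by rw [hφ, dist_self]
  have hupper : ((strongPow n k).comap φ).edist (w i) x ≤ φ x i := by
    rw [hφ, (hH.preconnected _ _).coe_dist_eq_edist]
    exact edist_anti hle
  have hlower : ((φ x i : ℕ) : ℕ∞) ≤ ((strongPow n k).comap φ).edist (w i) x := by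
    have hcoord := natAbs_sub_le_edist (φ (w i)) (φ x) i
    rw [hanchor, Nat.cast_zero, zero_sub, Int.natAbs_neg, Int.natAbs_natCast] at hcoord
    exact hcoord.trans (Hom.edist_le (⟨φ, id⟩ : (strongPow n k).comap φ →g strongPow n k) _ _)
  rw [SimpleGraph.dist, le_antisymm hupper hlower, ENat.toNat_natCast]

end strongPow

theorem resolving_supergraph_iff_resolved_embedding_general {V : Type*} [Fintype V]
    (G : SimpleGraph V) (hG : G.Connected) (D k : ℕ) (hD : G.diam = D)
    (w : Fin k → V) :
    (∃ H : SimpleGraph V, G ≤ H ∧ IsResolvingSet H (Set.range w)) ↔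
      ∃ φ : V → (Fin k → Fin (D + 1)), Function.Injective φ ∧
        (∀ u v : V, G.Adj u v → (strongPow (D + 1) k).Adj (φ u) (φ v)) ∧
        ∀ (x : V) (i : Fin k), (φ x i : ℕ) =
          ((strongPow (D + 1) k).induce (Set.range φ)).dist
            ⟨φ (w i), Set.mem_range_self _⟩ ⟨φ x, Set.mem_range_self _⟩ := by
  constructor
  · rintro ⟨H, hGH, hres⟩
    have hbound (i : Fin k) (x : V) : H.dist (w i) x < D + 1 :=
      Nat.lt_succ_of_le <| ((hG.preconnected _ _).dist_anti hGH).trans (hD ▸ hG.dist_le_diam _ _)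
    let φ : V → Fin k → Fin (D + 1) := fun x i => ⟨H.dist (w i) x, hbound i x⟩
    have hφ : φ.Injective := fun u v h =>
      isResolvingSet_range_iff.mp hres (funext fun i => congrArg Fin.val (congrFun h i))
    have hle : H ≤ (strongPow (D + 1) k).comap φ := fun u v huv =>
      ⟨fun h => huv.ne (hφ h), fun i => huv.natAbs_sub_dist_le_one_s3 (w i)⟩
    refine ⟨φ, hφ, fun u v h => hle (hGH h), fun x i => ?_⟩
    rw [← dist_comap_eq_dist_induce_range hφ,
      strongPow.dist_comap_eq_of_le (hG.mono hGH) hle (fun _ _ => rfl)]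
  · rintro ⟨φ, hφ, hadj, hdist⟩
    refine ⟨(strongPow (D + 1) k).comap φ, fun u v h => hadj u v h, ?_⟩
    refine isResolvingSet_range_iff.mpr fun u v huv => hφ (funext fun i => Fin.ext ?_)
    simpa only [dist_comap_eq_dist_induce_range hφ, ← hdist] using congrFun huv i

/-- `W = range w` is a resolving set of some spanning supergraph of `G` iff there is a
`W`-resolved embedding of `G` in the strong product of `k` copies of `P (D+1)`. -/
theorem resolving_supergraph_iff_resolved_embedding {V : Type*} [Fintype V]
    (G : SimpleGraph V) (hG : G.Connected) (D k : ℕ) (hD : G.diam = D)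
    (w : Fin k → V) (hw : Function.Injective w) :
    (∃ H : SimpleGraph V, G ≤ H ∧ IsResolvingSet H (Set.range w)) ↔
      ∃ φ : V → (Fin k → Fin (D + 1)), Function.Injective φ ∧
        (∀ u v : V, G.Adj u v → (strongPow (D + 1) k).Adj (φ u) (φ v)) ∧
        ∀ (x : V) (i : Fin k), (φ x i : ℕ) =
          ((strongPow (D + 1) k).induce (Set.range φ)).dist
            ⟨φ (w i), Set.mem_range_self _⟩ ⟨φ x, Set.mem_range_self _⟩ :=
  resolving_supergraph_iff_resolved_embedding_general G hG D k hD w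
end

section
/- Let T be a tree that is not a path, and let S be the set of exterior major vertices of T. Then β(T) = Σ_{v ∈ S} (ter(v) − 1). -/
open SimpleGraph

/-- A major vertex: a vertex of degree at least `3`. -/
def IsMajor {V : Type*} [Fintype V] (G : SimpleGraph V) (v : V) : Prop :=
  3 ≤ (G.neighborSet v).ncard

/-- A leaf: a vertex of degree `1`. -/
def IsLeaf {V : Type*} [Fintype V] (G : SimpleGraph V) (u : V) : Prop :=
  (G.neighborSet u).ncard = 1

/-- `u` is a terminal vertex of the major vertex `v`: `u` is a leaf and `v` is the
(strictly) closest major vertex to `u`. -/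
def IsTerminalOf {V : Type*} [Fintype V] (G : SimpleGraph V) (u v : V) : Prop :=
  IsLeaf G u ∧ IsMajor G v ∧ ∀ w : V, IsMajor G w → w ≠ v → G.dist u v < G.dist u w

/-- The terminal degree of `v`: the number of its terminal vertices. -/
noncomputable def ter {V : Type*} [Fintype V] (G : SimpleGraph V) (v : V) : ℕ :=
  {u | IsTerminalOf G u v}.ncard

/-- An exterior major vertex: a major vertex with at least one terminal vertex. -/
def IsExteriorMajor {V : Type*} [Fintype V] (G : SimpleGraph V) (v : V) : Prop :=
  IsMajor G v ∧ 0 < ter G v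

/-!
In a tree with a major vertex, the leg from a terminal vertex `u` of `v` to `v` is a path of
non-major vertices, and distinct legs are disjoint. If a vertex set `W` misses the legs of two
terminal vertices of `v`, the two neighbours of `v` on these legs are equidistant from every
vertex of `W`. Hence a resolving set meets all legs but one at each exterior major vertex, and
`β(T) ≥ Σ (ter v - 1)`.

Conversely, let `W` contain all terminal vertices but one of each exterior major vertex. If
`x ≠ y` had the same distances to `W`, every vertex of `W` would avoid the two branches towards
`x` and `y` at a middle vertex `m` of the path from `x` to `y`. But two such branches always
contain two terminal vertices of a common major vertex (if they are free of major vertices,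
either `m` is major or the tree is covered by them and `m`), and one of the two lies in `W`.
-/

namespace SimpleGraph

variable {V : Type*} {G T : SimpleGraph V} {u v w x y z m n c : V}

lemma Walk.dist_add_dist_of_mem_support {p : G.Walk u v} (hp : p.length = G.dist u v)
    (hw : w ∈ p.support) : G.dist u w + G.dist w v = G.dist u v := by
  classical
  have hsplit := congrArg Walk.length (p.take_spec hw)
  rw [Walk.length_append] at hsplit
  have h₁ := G.dist_le (p.takeUntil w hw)
  have h₂ := G.dist_le (p.dropUntil w hw)
  have h₃ := (p.takeUntil w hw).reachable.dist_triangle_left v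
  omega

lemma Reachable.exists_adj_dist_add_one (h : G.Reachable u v) (hne : u ≠ v) :
    ∃ w, G.Adj u w ∧ G.dist w v + 1 = G.dist u v := by
  obtain ⟨p, hp⟩ := h.exists_walk_length_eq_dist
  cases p with
  | nil => exact absurd rfl hne
  | cons hadj q =>
    have h₁ := G.dist_le q
    have h₂ := hadj.reachable.dist_triangle_left v
    rw [dist_eq_one_iff_adj.2 hadj] at h₂
    rw [Walk.length_cons] at hp
    exact ⟨_, hadj, by omega⟩

lemma Reachable.exists_dist_eq (h : G.Reachable u v) {k : ℕ} (hk : k ≤ G.dist u v) :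
    ∃ w, G.dist u w = k ∧ G.dist w v = G.dist u v - k := by
  induction k with
  | zero => exact ⟨u, dist_self, rfl⟩
  | succ k ih =>
    obtain ⟨w, huw, hwv⟩ := ih (by omega)
    have hreach : G.Reachable w v := Reachable.of_dist_ne_zero (by omega)
    obtain ⟨w', hadj, hw'⟩ := hreach.exists_adj_dist_add_one (by rintro rfl; simp at hwv; omega)
    have h₁ := hadj.reachable.dist_triangle_right u
    have h₂ := (hadj.symm.reachable.trans hreach).dist_triangle_right u
    rw [dist_eq_one_iff_adj.2 hadj] at h₁
    exact ⟨w', by omega, by omega⟩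

/-- `G.gate u v` is the neighbour of `u` on a shortest path from `u` to `v`; it is the junk
value `v` when `u = v` or `v` is unreachable. -/
noncomputable def gate (G : SimpleGraph V) (u v : V) : V :=
  open Classical in
  if h : ∃ w, G.Adj u w ∧ G.dist w v + 1 = G.dist u v then h.choose else v

/-- In a tree, the component of `G - m` containing the neighbour `n` of `m`. -/
def branch (G : SimpleGraph V) (m n : V) : Set V :=
  {z | z ≠ m ∧ G.gate m z = n}

lemma Connected.gate_spec (hG : G.Connected) (hne : u ≠ v) :
    G.Adj u (G.gate u v) ∧ G.dist (G.gate u v) v + 1 = G.dist u v := by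
  have h := (hG u v).exists_adj_dist_add_one hne
  rw [gate, dif_pos h]
  exact h.choose_spec

lemma Connected.adj_gate (hG : G.Connected) (hne : u ≠ v) : G.Adj u (G.gate u v) :=
  (hG.gate_spec hne).1

lemma Connected.dist_gate_add_one (hG : G.Connected) (hne : u ≠ v) :
    G.dist (G.gate u v) v + 1 = G.dist u v :=
  (hG.gate_spec hne).2

lemma Connected.gate_eq_of_adj (hG : G.Connected) (h : G.Adj u v) : G.gate u v = v := by
  have := hG.dist_gate_add_one h.ne
  rw [dist_eq_one_iff_adj.2 h, add_eq_right, hG.dist_eq_zero_iff] at this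
  exact this

lemma Connected.mem_branch_of_adj (hG : G.Connected) (h : G.Adj m n) : n ∈ G.branch m n :=
  ⟨h.ne', hG.gate_eq_of_adj h⟩

lemma Connected.gate_ne_gate_of_dist_add_dist (hG : G.Connected) (hx : z ≠ x) (hy : z ≠ y)
    (h : G.dist x z + G.dist z y = G.dist x y) : G.gate z x ≠ G.gate z y := by
  intro hg
  have hx' := hG.dist_gate_add_one hx
  have hy' := hG.dist_gate_add_one hy
  rw [← hg] at hy'
  have htri : G.dist x y ≤ G.dist x (G.gate z x) + G.dist (G.gate z x) y := hG.dist_triangle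
  rw [dist_comm (u := x) (v := G.gate z x)] at htri
  rw [dist_comm (u := x) (v := z)] at h
  omega

namespace IsTree

lemma gate_eq (hT : T.IsTree) (hne : u ≠ v) (hadj : T.Adj u w)
    (hw : T.dist w v + 1 = T.dist u v) : T.gate u v = w := by
  have hpath : ∀ w, T.Adj u w → T.dist w v + 1 = T.dist u v →
      ∃ p : T.Walk u v, p.IsPath ∧ p.snd = w := by
    intro w hadj hw
    obtain ⟨q, hq⟩ := hT.connected.exists_walk_length_eq_dist w v
    refine ⟨.cons hadj q, Walk.isPath_of_length_eq_dist _ ?_, by simp⟩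
    rw [Walk.length_cons]
    omega
  obtain ⟨p, hp, hpg⟩ := hpath _ (hT.connected.adj_gate hne) (hT.connected.dist_gate_add_one hne)
  obtain ⟨q, hq, rfl⟩ := hpath w hadj hw
  rw [← hpg, (hT.existsUnique_path u v).unique hp hq]

lemma dist_eq_add_one_of_ne_gate (hT : T.IsTree) (hne : u ≠ v) (hadj : T.Adj u w)
    (hw : w ≠ T.gate u v) : T.dist w v = T.dist u v + 1 := by
  rw [dist_comm, dist_comm (u := u)]
  rcases hT.dist_eq_dist_add_one_of_adj v hadj with h | h
  · exact absurd (hT.gate_eq hne hadj (by rw [dist_comm (u := w), dist_comm (u := u), h])).symm hw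
  · exact h

lemma gate_eq_of_dist_add_dist (hT : T.IsTree) (hw : w ≠ u)
    (h : T.dist u w + T.dist w v = T.dist u v) : T.gate u v = T.gate u w := by
  have hpos := hT.connected.pos_dist_of_ne hw.symm
  have hv : u ≠ v := by rintro rfl; rw [dist_self] at h; omega
  refine hT.gate_eq hv (hT.connected.adj_gate hw.symm) ?_
  have hg := hT.connected.dist_gate_add_one hw.symm
  have h₁ : T.dist (T.gate u w) v ≤ T.dist (T.gate u w) w + T.dist w v := hT.connected.dist_triangle
  have h₂ : T.dist u v ≤ T.dist u (T.gate u w) + T.dist (T.gate u w) v := hT.connected.dist_triangle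
  rw [dist_eq_one_iff_adj.2 (hT.connected.adj_gate hw.symm)] at h₂
  omega

lemma gate_eq_gate_of_adj (hT : T.IsTree) (hz : z ≠ u) (hz' : w ≠ u) (hadj : T.Adj z w) :
    T.gate u z = T.gate u w := by
  rcases hT.dist_eq_dist_add_one_of_adj u hadj with h | h
  · exact hT.gate_eq_of_dist_add_dist hz' (by rw [dist_eq_one_iff_adj.2 hadj.symm]; omega)
  · exact (hT.gate_eq_of_dist_add_dist hz (by rw [dist_eq_one_iff_adj.2 hadj]; omega)).symm

lemma gate_eq_gate_of_walk (hT : T.IsTree) (p : T.Walk x y) (hu : u ∉ p.support) :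
    T.gate u x = T.gate u y := by
  induction p with
  | nil => rfl
  | cons hadj q ih =>
    rw [Walk.support_cons, List.mem_cons, not_or] at hu
    exact (hT.gate_eq_gate_of_adj (Ne.symm hu.1)
      (fun h => hu.2 (h ▸ q.start_mem_support)) hadj).trans (ih hu.2)

lemma dist_add_dist_of_gate_ne (hT : T.IsTree) (hg : T.gate u x ≠ T.gate u y) :
    T.dist x u + T.dist u y = T.dist x y := by
  obtain ⟨p, hp⟩ := hT.connected.exists_walk_length_eq_dist x y
  by_cases hu : u ∈ p.support
  · exact Walk.dist_add_dist_of_mem_support hp hu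
  · exact absurd (hT.gate_eq_gate_of_walk p hu) hg

lemma mem_branch_of_mem_branch (hT : T.IsTree) (hv : v ∈ T.branch m n) (hc : c ≠ T.gate v m)
    (hz : z ∈ T.branch v c) :
    z ∈ T.branch m n ∧ T.dist m z = T.dist m v + T.dist v z := by
  obtain ⟨hvm, rfl⟩ := hv
  obtain ⟨hzv, rfl⟩ := hz
  have hsep := hT.dist_add_dist_of_gate_ne hc
  have hpos := hT.connected.pos_dist_of_ne hvm
  have hzm : z ≠ m := by rintro rfl; rw [dist_self] at hsep; omega
  rw [dist_comm (u := z) (v := v), dist_comm (u := z) (v := m), dist_comm (u := v) (v := m)] at hsep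
  have hbet : T.dist m v + T.dist v z = T.dist m z := by omega
  exact ⟨⟨hzm, hT.gate_eq_of_dist_add_dist hvm hbet⟩, hbet.symm⟩

/-- `m` is a middle vertex of the path from `x` to `y`. -/
lemma exists_branches_of_two_le_dist (hT : T.IsTree) (hxy : 2 ≤ T.dist x y) :
    ∃ m a b, T.Adj m a ∧ T.Adj m b ∧ a ≠ b ∧
      ∀ w, T.dist w x = T.dist w y → w ∉ T.branch m a ∧ w ∉ T.branch m b := by
  obtain ⟨m, hxm, hmy⟩ := (hT.connected x y).exists_dist_eq (k := T.dist x y / 2) (by omega)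
  have hmx : m ≠ x := by rintro rfl; simp at hxm; omega
  have hmy' : m ≠ y := by rintro rfl; simp at hmy; omega
  have hgate := hT.connected.gate_ne_gate_of_dist_add_dist hmx hmy' (by omega)
  have hbranch : ∀ {x y}, x ≠ m → y ≠ m → T.gate m x ≠ T.gate m y → ∀ w,
      T.dist w x = T.dist w y → w ∈ T.branch m (T.gate m x) → T.dist m y + 2 ≤ T.dist m x := by
    rintro x y hx hy hg w hw ⟨hwm, hwx⟩
    have hsep := hT.dist_add_dist_of_gate_ne (hwx ▸ hg)
    have hw' := hT.connected.dist_gate_add_one hwm.symm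
    have hx' := hT.connected.dist_gate_add_one hx.symm
    have htri : T.dist w x ≤ T.dist w (T.gate m x) + T.dist (T.gate m x) x :=
      hT.connected.dist_triangle
    rw [hwx, dist_comm (u := T.gate m x) (v := w)] at hw'
    rw [dist_comm (u := w) (v := m)] at hsep
    omega
  refine ⟨m, _, _, hT.connected.adj_gate hmx, hT.connected.adj_gate hmy', hgate,
    fun w hw => ⟨fun hwa => ?_, fun hwb => ?_⟩⟩
  · have := hbranch hmx.symm hmy'.symm hgate w hw hwa
    rw [dist_comm (u := m) (v := x)] at this
    omega
  · have := hbranch hmy'.symm hmx.symm hgate.symm w hw.symm hwb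
    rw [dist_comm (u := m) (v := x)] at this
    omega

end IsTree

end SimpleGraph

section Terminals

variable {V : Type*} [Fintype V] {T : SimpleGraph V} {u v x y m n a b c : V}

lemma IsLeaf.eq_of_adj (hu : IsLeaf T u) (ha : T.Adj u a) (hb : T.Adj u b) : a = b := by
  obtain ⟨d, hd⟩ := Set.ncard_eq_one.1 hu
  have ha' : a ∈ T.neighborSet u := ha
  have hb' : b ∈ T.neighborSet u := hb
  rw [hd, Set.mem_singleton_iff] at ha' hb'
  rw [ha', hb']

lemma isLeaf_of_forall_adj_eq (ha : T.Adj u a) (h : ∀ b, T.Adj u b → b = a) : IsLeaf T u := by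
  have : T.neighborSet u = {a} := Set.eq_singleton_iff_unique_mem.2 ⟨ha, h⟩
  rw [IsLeaf, this, Set.ncard_singleton]

lemma exists_isLeaf [Nontrivial V] (hT : T.IsTree) : ∃ u, IsLeaf T u := by
  classical
  obtain ⟨u, hu⟩ := hT.exists_vert_degree_one_of_nontrivial
  refine ⟨u, ?_⟩
  rw [IsLeaf, ← Nat.card_coe_set_eq, Nat.card_eq_fintype_card, card_neighborSet_eq_degree, hu]

lemma isMajor_of_adj (ha : T.Adj v a) (hb : T.Adj v b) (hc : T.Adj v c) (hab : a ≠ b)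
    (hac : a ≠ c) (hbc : b ≠ c) : IsMajor T v := by
  have hsub : ({a, b, c} : Set V) ⊆ T.neighborSet v := by
    rintro d (rfl | rfl | rfl)
    exacts [ha, hb, hc]
  rw [IsMajor, ← Set.ncard_eq_three.2 ⟨a, b, c, hab, hac, hbc, rfl⟩]
  exact Set.ncard_le_ncard hsub

lemma eq_or_eq_of_not_isMajor (hv : ¬ IsMajor T v) (ha : T.Adj v a) (hb : T.Adj v b)
    (hab : a ≠ b) (hc : T.Adj v c) : c = a ∨ c = b := by
  by_contra! h
  exact hv (isMajor_of_adj ha hb hc hab (Ne.symm h.1) (Ne.symm h.2))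

lemma IsMajor.exists_adj_ne (hv : IsMajor T v) (d : V) :
    ∃ a b, T.Adj v a ∧ T.Adj v b ∧ a ≠ b ∧ a ≠ d ∧ b ≠ d := by
  obtain ⟨a, b, c, ha, hb, hc, hab, hac, hbc⟩ := (Set.two_lt_ncard_iff).1 (show 2 < _ from hv)
  by_cases had : a = d
  · exact ⟨b, c, hb, hc, hbc, fun h => hab (had.trans h.symm), fun h => hac (had.trans h.symm)⟩
  by_cases hbd : b = d
  · exact ⟨a, c, ha, hc, hac, had, fun h => hbc (hbd.trans h.symm)⟩
  · exact ⟨a, b, ha, hb, hab, had, hbd⟩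

/-- The paths from `x` and `y` to the leaf `u` merge at a vertex with three neighbours. -/
lemma exists_isMajor_of_dist_eq (hT : T.IsTree) (hu : IsLeaf T u) (hxy : x ≠ y)
    (hd : T.dist u x = T.dist u y) : ∃ b, IsMajor T b ∧ T.dist u b < T.dist u x := by
  induction h : T.dist u x using Nat.strong_induction_on generalizing x y with
  | _ n ih =>
  have hx : x ≠ u := by
    rintro rfl; rw [dist_self] at hd; exact hxy (hT.connected.dist_eq_zero_iff.1 hd.symm)
  have hy : y ≠ u := by
    rintro rfl; rw [dist_self] at hd; exact hxy (hT.connected.dist_eq_zero_iff.1 hd).symm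
  have hgx := hT.connected.dist_gate_add_one hx
  have hgy := hT.connected.dist_gate_add_one hy
  rw [dist_comm (u := x), dist_comm (u := T.gate x u)] at hgx
  rw [dist_comm (u := y), dist_comm (u := T.gate y u)] at hgy
  by_cases hg : T.gate x u = T.gate y u
  · set b := T.gate x u
    have hbx : T.Adj b x := (hT.connected.adj_gate hx).symm
    have hby : T.Adj b y := hg ▸ (hT.connected.adj_gate hy).symm
    have hbu : b ≠ u := fun hbu => hxy (hu.eq_of_adj (hbu ▸ hbx) (hbu ▸ hby))
    have hgb := hT.connected.dist_gate_add_one hbu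
    rw [dist_comm (u := b), dist_comm (u := T.gate b u)] at hgb
    have hne : ∀ {w}, T.dist u w = n → T.gate b u ≠ w := by rintro w hw rfl; omega
    exact ⟨b, isMajor_of_adj hbx hby (hT.connected.adj_gate hbu) hxy (hne h).symm
      (hne (hd ▸ h)).symm, by omega⟩
  · obtain ⟨b, hb, hlt⟩ := ih (n - 1) (by omega) hg (by omega) (by omega)
    exact ⟨b, hb, by omega⟩

lemma nonempty_iso_pathGraph (hT : T.IsTree) {r : V} (hr : Function.Injective (T.dist r)) :
    Nonempty (T ≃g pathGraph (Fintype.card V)) := by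
  have hlt : ∀ v, T.dist r v < Fintype.card V := fun v => by
    obtain ⟨p, hp, hlen⟩ := hT.connected.exists_path_of_dist r v
    exact hlen ▸ hp.length_lt
  let f : V → Fin (Fintype.card V) := fun v => ⟨T.dist r v, hlt v⟩
  have hf : f.Injective := fun a b h => hr (congrArg Fin.val h)
  have hbij : f.Bijective := (Fintype.bijective_iff_injective_and_card f).2 ⟨hf, by simp⟩
  have hadj : ∀ {a b}, T.dist r a + 1 = T.dist r b → T.Adj a b := by
    intro a b h
    have hb : b ≠ r := by rintro rfl; simp at h
    have hg := hT.connected.dist_gate_add_one hb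
    rw [dist_comm (u := b), dist_comm (u := T.gate b r)] at hg
    have : T.gate b r = a := hr (by omega)
    exact this ▸ (hT.connected.adj_gate hb).symm
  refine ⟨⟨Equiv.ofBijective f hbij, fun {a b} => ?_⟩⟩
  simp only [Equiv.ofBijective_apply, pathGraph_adj, f]
  refine ⟨fun h => h.elim hadj fun h => (hadj h).symm, fun h => ?_⟩
  rcases hT.dist_eq_dist_add_one_of_adj r h with h | h <;> omega

lemma exists_isMajor (hT : T.IsTree) (hnp : ∀ n : ℕ, IsEmpty (T ≃g pathGraph n)) :
    ∃ v, IsMajor T v := by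
  by_contra! hno
  obtain ⟨r, hr⟩ : ∃ r, Function.Injective (T.dist r) := by
    rcases subsingleton_or_nontrivial V with _ | _
    · exact ⟨hT.connected.nonempty.some, Function.injective_of_subsingleton _⟩
    · obtain ⟨r, hr⟩ := exists_isLeaf hT
      refine ⟨r, fun x y hd => by_contra fun hxy => ?_⟩
      obtain ⟨b, hb, -⟩ := exists_isMajor_of_dist_eq hT hr hxy hd
      exact hno b hb
  exact (hnp _).false (nonempty_iso_pathGraph hT hr).some

lemma IsTerminalOf.ne (h : IsTerminalOf T u v) : u ≠ v := by
  rintro rfl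
  have h₁ : (T.neighborSet u).ncard = 1 := h.1
  have h₃ : 3 ≤ (T.neighborSet u).ncard := h.2.1
  omega

lemma IsTerminalOf.unique {v' : V} (h : IsTerminalOf T u v) (h' : IsTerminalOf T u v') :
    v = v' := by
  by_contra hne
  have := h.2.2 v' h'.2.1 (Ne.symm hne)
  have := h'.2.2 v h.2.1 hne
  omega

lemma IsTerminalOf.isExteriorMajor (h : IsTerminalOf T u v) : IsExteriorMajor T v :=
  ⟨h.2.1, (Set.ncard_pos (Set.toFinite _)).2 ⟨u, h⟩⟩

lemma exists_isTerminalOf_mem_branch (hT : T.IsTree) (hv : IsMajor T v) (hc : T.Adj v c)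
    (hfree : ∀ w ∈ T.branch v c, ¬ IsMajor T w) : ∃ u ∈ T.branch v c, IsTerminalOf T u v := by
  obtain ⟨u, ⟨huv, hgu⟩, hmax⟩ := Set.exists_max_image (T.branch v c) (T.dist v)
    (Set.toFinite _) ⟨c, hT.connected.mem_branch_of_adj hc⟩
  have hleaf : IsLeaf T u := by
    refine isLeaf_of_forall_adj_eq (hT.connected.adj_gate huv) fun n hn => by_contra fun hng => ?_
    have hd := hT.dist_eq_add_one_of_ne_gate huv hn hng
    have hnv : n ≠ v := by rintro rfl; simp at hd
    have hnb : n ∈ T.branch v c := ⟨hnv, (hT.gate_eq_gate_of_adj hnv huv hn.symm).trans hgu⟩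
    have := hmax n hnb
    rw [dist_comm (u := v) (v := n), dist_comm (u := v) (v := u)] at this
    omega
  refine ⟨u, ⟨huv, hgu⟩, hleaf, hv, fun w hw hwv => ?_⟩
  have hgw : T.gate v u ≠ T.gate v w := fun h => hfree w ⟨hwv, h ▸ hgu⟩ hw
  have hsep := hT.dist_add_dist_of_gate_ne hgw
  have := hT.connected.pos_dist_of_ne (Ne.symm hwv)
  omega

/-- Beyond a major vertex of the branch farthest from `m` there are no major vertices, so each
of its other branches ends in a terminal vertex of it. -/
lemma exists_isTerminalOf_pair_mem_branch (hT : T.IsTree)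
    (h : ∃ w ∈ T.branch m n, IsMajor T w) :
    ∃ v u₁ u₂, u₁ ≠ u₂ ∧ IsTerminalOf T u₁ v ∧ IsTerminalOf T u₂ v ∧
      u₁ ∈ T.branch m n ∧ u₂ ∈ T.branch m n := by
  obtain ⟨v, ⟨hvb, hv⟩, hmax⟩ := Set.exists_max_image {w | w ∈ T.branch m n ∧ IsMajor T w}
    (T.dist m) (Set.toFinite _) h
  obtain ⟨c₁, c₂, hc₁, hc₂, hc, hc₁m, hc₂m⟩ := hv.exists_adj_ne (T.gate v m)
  have hfree : ∀ c, c ≠ T.gate v m → ∀ w ∈ T.branch v c, ¬ IsMajor T w := by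
    intro c hc w hw hwmaj
    obtain ⟨hwb, hdist⟩ := hT.mem_branch_of_mem_branch hvb hc hw
    have := hmax w ⟨hwb, hwmaj⟩
    have := hT.connected.pos_dist_of_ne hw.1.symm
    omega
  obtain ⟨u₁, hu₁, h₁⟩ := exists_isTerminalOf_mem_branch hT hv hc₁ (hfree c₁ hc₁m)
  obtain ⟨u₂, hu₂, h₂⟩ := exists_isTerminalOf_mem_branch hT hv hc₂ (hfree c₂ hc₂m)
  refine ⟨v, u₁, u₂, ?_, h₁, h₂, (hT.mem_branch_of_mem_branch hvb hc₁m hu₁).1,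
    (hT.mem_branch_of_mem_branch hvb hc₂m hu₂).1⟩
  rintro rfl
  exact hc (hu₁.2.symm.trans hu₂.2)

lemma exists_isTerminalOf_pair_mem_branches (hT : T.IsTree) (hmaj : ∃ v, IsMajor T v)
    (ha : T.Adj m a) (hb : T.Adj m b) (hab : a ≠ b) :
    ∃ v u₁ u₂, u₁ ≠ u₂ ∧ IsTerminalOf T u₁ v ∧ IsTerminalOf T u₂ v ∧
      u₁ ∈ T.branch m a ∪ T.branch m b ∧ u₂ ∈ T.branch m a ∪ T.branch m b := by
  by_cases hA : ∃ w ∈ T.branch m a, IsMajor T w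
  · obtain ⟨v, u₁, u₂, hne, h₁, h₂, hu₁, hu₂⟩ := exists_isTerminalOf_pair_mem_branch hT hA
    exact ⟨v, u₁, u₂, hne, h₁, h₂, .inl hu₁, .inl hu₂⟩
  by_cases hB : ∃ w ∈ T.branch m b, IsMajor T w
  · obtain ⟨v, u₁, u₂, hne, h₁, h₂, hu₁, hu₂⟩ := exists_isTerminalOf_pair_mem_branch hT hB
    exact ⟨v, u₁, u₂, hne, h₁, h₂, .inr hu₁, .inr hu₂⟩
  push Not at hA hB
  by_cases hm : IsMajor T m
  · obtain ⟨u₁, hu₁, h₁⟩ := exists_isTerminalOf_mem_branch hT hm ha hA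
    obtain ⟨u₂, hu₂, h₂⟩ := exists_isTerminalOf_mem_branch hT hm hb hB
    refine ⟨m, u₁, u₂, ?_, h₁, h₂, .inl hu₁, .inr hu₂⟩
    rintro rfl
    exact hab (hu₁.2.symm.trans hu₂.2)
  · obtain ⟨w, hw⟩ := hmaj
    have hwm : w ≠ m := by rintro rfl; exact hm hw
    rcases eq_or_eq_of_not_isMajor hm ha hb hab (hT.connected.adj_gate hwm.symm) with h | h
    exacts [absurd hw (hA w ⟨hwm, h⟩), absurd hw (hB w ⟨hwm, h⟩)]

end Terminals

/-- For a terminal vertex `u` of `v`, the leg of `u`: the path from `u` to `v` without `v`. -/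
def leg {V : Type*} (T : SimpleGraph V) (u v : V) : Set V :=
  {z | T.dist u z + T.dist z v = T.dist u v ∧ z ≠ v}

lemma gate_eq_of_mem_leg {V : Type*} {T : SimpleGraph V} {u v z : V} (hT : T.IsTree)
    (hz : z ∈ leg T u v) : T.gate v z = T.gate v u := by
  refine (hT.gate_eq_of_dist_add_dist hz.2 ?_).symm
  rw [dist_comm (u := v) (v := z), dist_comm (u := z) (v := u), dist_comm (u := v) (v := u)]
  exact (add_comm _ _).trans hz.1

section Legs

variable {V : Type*} [Fintype V] {T : SimpleGraph V} {u v w z u₁ u₂ v₁ v₂ : V}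

lemma not_isMajor_of_mem_leg (h : IsTerminalOf T u v) (hz : z ∈ leg T u v) : ¬ IsMajor T z :=
  fun hzmaj => by have := h.2.2 z hzmaj hz.2; have := hz.1; omega

lemma gate_mem_leg (hT : T.IsTree) (h : IsTerminalOf T u v) : T.gate v u ∈ leg T u v := by
  have hadj := hT.connected.adj_gate h.ne.symm
  have hd := hT.connected.dist_gate_add_one h.ne.symm
  rw [dist_comm (u := T.gate v u), dist_comm (u := v)] at hd
  refine ⟨?_, hadj.ne'⟩
  rw [dist_comm (u := T.gate v u), dist_eq_one_iff_adj.2 hadj]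
  omega

/-- The inner vertices of the leg are not major, so the leg does not branch. -/
lemma mem_leg_of_gate_eq (hT : T.IsTree) (h : IsTerminalOf T u v) (hz : z ≠ v)
    (hg : T.gate v z = T.gate v u) : z ∈ leg T u v := by
  induction hn : T.dist v z using Nat.strong_induction_on generalizing z with
  | _ n ih =>
  set z' := T.gate z v
  have hadj : T.Adj z z' := hT.connected.adj_gate hz
  by_cases hz'v : z' = v
  · have hzu : z = T.gate v u := by rw [← hg, hT.connected.gate_eq_of_adj (hz'v ▸ hadj).symm]
    exact hzu ▸ gate_mem_leg hT h
  have hdz' := hT.connected.dist_gate_add_one hz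
  rw [dist_comm (u := z'), dist_comm (u := z)] at hdz'
  have hz'leg : z' ∈ leg T u v :=
    ih _ (by omega) hz'v ((hT.gate_eq_gate_of_adj hz'v hz hadj.symm).trans hg) rfl
  have hz'u : z' ≠ u := by
    intro hz'u
    have hzu : z = T.gate u v := h.1.eq_of_adj (hz'u ▸ hadj.symm) (hT.connected.adj_gate h.ne)
    have := hT.connected.dist_gate_add_one h.ne
    rw [← hzu, dist_comm (u := z), dist_comm (u := u), ← hz'u] at this
    omega
  have hne := hT.connected.gate_ne_gate_of_dist_add_dist hz'u hz'v hz'leg.1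
  have hzg : z = T.gate z' u := by
    refine (eq_or_eq_of_not_isMajor (not_isMajor_of_mem_leg h hz'leg)
      (hT.connected.adj_gate hz'u) (hT.connected.adj_gate hz'v) hne hadj.symm).resolve_right ?_
    intro hzv
    have := hT.connected.dist_gate_add_one hz'v
    rw [← hzv, dist_comm (u := z), dist_comm (u := z')] at this
    omega
  have hdu := hT.connected.dist_gate_add_one hz'u
  rw [← hzg, dist_comm (u := z), dist_comm (u := z')] at hdu
  refine ⟨?_, hz⟩
  have hbet := hz'leg.1
  rw [dist_comm (u := z') (v := v)] at hbet
  rw [dist_comm (u := z) (v := v)]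
  omega

lemma gate_ne_gate_of_isTerminalOf (hT : T.IsTree) (h₁ : IsTerminalOf T u₁ v)
    (h₂ : IsTerminalOf T u₂ v) (hne : u₁ ≠ u₂) : T.gate v u₁ ≠ T.gate v u₂ := by
  intro hg
  have hbet := (mem_leg_of_gate_eq hT h₁ h₂.ne hg.symm).1
  exact hT.connected.gate_ne_gate_of_dist_add_dist hne.symm h₂.ne hbet
    (h₂.1.eq_of_adj (hT.connected.adj_gate hne.symm) (hT.connected.adj_gate h₂.ne))

/-- If `v₁ ≠ v₂`, each of them would lie between `z` and the other. -/
lemma eq_of_mem_leg_of_mem_leg (hT : T.IsTree) (h₁ : IsTerminalOf T u₁ v₁)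
    (h₂ : IsTerminalOf T u₂ v₂) (hz₁ : z ∈ leg T u₁ v₁) (hz₂ : z ∈ leg T u₂ v₂) : u₁ = u₂ := by
  have hsep : ∀ {u₁ v₁ u₂ v₂}, IsTerminalOf T u₁ v₁ → IsTerminalOf T u₂ v₂ →
      z ∈ leg T u₁ v₁ → v₁ ≠ v₂ → T.dist z v₁ + T.dist v₁ v₂ = T.dist z v₂ := by
    intro u₁ v₁ u₂ v₂ h₁ h₂ hz hne
    refine hT.dist_add_dist_of_gate_ne fun hg => ?_
    rw [gate_eq_of_mem_leg hT hz] at hg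
    exact not_isMajor_of_mem_leg h₁ (mem_leg_of_gate_eq hT h₁ hne.symm hg.symm) h₂.2.1
  obtain rfl : v₁ = v₂ := by
    by_contra hne
    have := hsep h₁ h₂ hz₁ hne
    have := hsep h₂ h₁ hz₂ (Ne.symm hne)
    have := hT.connected.pos_dist_of_ne hne
    have : T.dist v₂ v₁ = T.dist v₁ v₂ := dist_comm
    omega
  by_contra hne
  exact gate_ne_gate_of_isTerminalOf hT h₁ h₂ hne
    ((gate_eq_of_mem_leg hT hz₁).symm.trans (gate_eq_of_mem_leg hT hz₂))

lemma dist_gate_of_not_mem_leg (hT : T.IsTree) (h : IsTerminalOf T u v) (hw : w ∉ leg T u v) :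
    T.dist w (T.gate v u) = T.dist w v + 1 := by
  by_cases hwv : w = v
  · subst hwv
    rw [dist_self, dist_eq_one_iff_adj.2 (hT.connected.adj_gate h.ne.symm)]
  have hg : T.gate v u ≠ T.gate v w := fun hg => hw (mem_leg_of_gate_eq hT h hwv hg.symm)
  have := hT.dist_eq_add_one_of_ne_gate (Ne.symm hwv) (hT.connected.adj_gate h.ne.symm) hg
  rw [dist_comm (u := w), dist_comm (u := w), this, dist_comm]

end Legs

section MetricDimension

variable {V : Type*} [Fintype V] {T : SimpleGraph V} {u v u₁ u₂ : V}

noncomputable def terminalFinset (T : SimpleGraph V) (v : V) : Finset V :=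
  (Set.toFinite {u | IsTerminalOf T u v}).toFinset

lemma mem_terminalFinset : u ∈ terminalFinset T v ↔ IsTerminalOf T u v :=
  Set.Finite.mem_toFinset _

lemma card_terminalFinset : (terminalFinset T v).card = ter T v :=
  (Set.ncard_eq_toFinset_card _ _).symm

/-- If both legs miss `W`, the neighbours of `v` on them are equidistant from all of `W`. -/
lemma IsResolvingSet.exists_mem_leg (hT : T.IsTree) {W : Set V} (hW : IsResolvingSet T W)
    (h₁ : IsTerminalOf T u₁ v) (h₂ : IsTerminalOf T u₂ v) (hne : u₁ ≠ u₂) :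
    (∃ w ∈ W, w ∈ leg T u₁ v) ∨ ∃ w ∈ W, w ∈ leg T u₂ v := by
  by_contra! h
  refine gate_ne_gate_of_isTerminalOf hT h₁ h₂ hne (hW _ _ fun w hw => ?_)
  rw [dist_gate_of_not_mem_leg hT h₁ (h.1 w hw), dist_gate_of_not_mem_leg hT h₂ (h.2 w hw)]

open Classical in
lemma ter_sub_one_le_card_filter (hT : T.IsTree) {W : Finset V} (hW : IsResolvingSet T ↑W)
    (v : V) :
    ter T v - 1 ≤ ((terminalFinset T v).filter fun u => ∃ w ∈ W, w ∈ leg T u v).card := by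
  have hmiss : ((terminalFinset T v).filter fun u => ¬ ∃ w ∈ W, w ∈ leg T u v).card ≤ 1 := by
    refine Finset.card_le_one.2 fun u₁ hu₁ u₂ hu₂ => by_contra fun hne => ?_
    rw [Finset.mem_filter, mem_terminalFinset] at hu₁ hu₂
    rcases hW.exists_mem_leg hT hu₁.1 hu₂.1 hne with h | h
    exacts [hu₁.2 h, hu₂.2 h]
  rw [← card_terminalFinset, ← Finset.card_filter_add_card_filter_not
    (fun u => ∃ w ∈ W, w ∈ leg T u v)]
  omega

open Classical in
lemma sum_ter_sub_one_le_card (hT : T.IsTree) {W : Finset V} (hW : IsResolvingSet T ↑W) :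
    ∑ v ∈ (Set.toFinite {v | IsExteriorMajor T v}).toFinset, (ter T v - 1) ≤ W.card := by
  set S := (Set.toFinite {v | IsExteriorMajor T v}).toFinset
  set hit : V → Finset V :=
    fun v => (terminalFinset T v).filter fun u => ∃ w ∈ W, w ∈ leg T u v
  set legW : V → Finset V :=
    fun u => W.filter fun w => ∃ v, IsTerminalOf T u v ∧ w ∈ leg T u v
  have hhit : (S : Set V).PairwiseDisjoint hit := fun v₁ _ v₂ _ hne =>
    Finset.disjoint_left.2 fun u h₁ h₂ => hne <|
      (mem_terminalFinset.1 (Finset.mem_filter.1 h₁).1).unique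
        (mem_terminalFinset.1 (Finset.mem_filter.1 h₂).1)
  have hlegW : (S.biUnion hit : Set V).PairwiseDisjoint legW := fun u₁ _ u₂ _ hne =>
    Finset.disjoint_left.2 fun w h₁ h₂ => by
      obtain ⟨-, v₁, ht₁, hw₁⟩ := Finset.mem_filter.1 h₁
      obtain ⟨-, v₂, ht₂, hw₂⟩ := Finset.mem_filter.1 h₂
      exact hne (eq_of_mem_leg_of_mem_leg hT ht₁ ht₂ hw₁ hw₂)
  have hlegW_ne : ∀ u ∈ S.biUnion hit, (legW u).Nonempty := fun u hu => by
    obtain ⟨v, -, hu⟩ := Finset.mem_biUnion.1 hu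
    obtain ⟨hu, w, hw, hwl⟩ := Finset.mem_filter.1 hu
    exact ⟨w, Finset.mem_filter.2 ⟨hw, v, mem_terminalFinset.1 hu, hwl⟩⟩
  calc ∑ v ∈ S, (ter T v - 1)
      ≤ ∑ v ∈ S, (hit v).card := Finset.sum_le_sum fun v _ => ter_sub_one_le_card_filter hT hW v
    _ = (S.biUnion hit).card := (Finset.card_biUnion hhit).symm
    _ ≤ ((S.biUnion hit).biUnion legW).card := Finset.card_le_card_biUnion hlegW hlegW_ne
    _ ≤ W.card := Finset.card_le_card (Finset.biUnion_subset.2 fun _ _ => Finset.filter_subset _ _)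

lemma isResolvingSet_of_isTerminalOf (hT : T.IsTree) (hmaj : ∃ v, IsMajor T v) {W : Set V}
    (hW : ∀ v u₁ u₂, u₁ ≠ u₂ → IsTerminalOf T u₁ v → IsTerminalOf T u₂ v → u₁ ∈ W ∨ u₂ ∈ W) :
    IsResolvingSet T W := by
  have hmeet : ∀ {m a b}, T.Adj m a → T.Adj m b → a ≠ b →
      ∃ w ∈ W, w ∈ T.branch m a ∨ w ∈ T.branch m b := by
    intro m a b ha hb hab
    obtain ⟨v, u₁, u₂, hne, h₁, h₂, hu₁, hu₂⟩ :=
      exists_isTerminalOf_pair_mem_branches hT hmaj ha hb hab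
    rcases hW v u₁ u₂ hne h₁ h₂ with h | h
    exacts [⟨u₁, h, hu₁⟩, ⟨u₂, h, hu₂⟩]
  intro x y hxy
  by_contra hne
  obtain ⟨v, hv⟩ := hmaj
  obtain ⟨a, b, ha, hb, hab, -⟩ := hv.exists_adj_ne v
  obtain ⟨w₀, hw₀, -⟩ := hmeet ha hb hab
  have h2 : 2 ≤ T.dist x y := by
    have := hT.connected.pos_dist_of_ne hne
    have : T.dist x y ≠ 1 := fun h =>
      hT.dist_ne_of_adj w₀ (dist_eq_one_iff_adj.1 h) (hxy w₀ hw₀)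
    omega
  obtain ⟨m, a, b, ha, hb, hab, havoid⟩ := hT.exists_branches_of_two_le_dist h2
  obtain ⟨w, hw, hmem⟩ := hmeet ha hb hab
  have := havoid w (hxy w hw)
  tauto

lemma exists_isResolvingSet_card_eq (hT : T.IsTree) (hmaj : ∃ v, IsMajor T v) :
    ∃ W : Finset V, W.card = ∑ v ∈ (Set.toFinite {v | IsExteriorMajor T v}).toFinset,
      (ter T v - 1) ∧ IsResolvingSet T ↑W := by
  classical
  set S := (Set.toFinite {v | IsExteriorMajor T v}).toFinset
  have hS : ∀ v ∈ S, (terminalFinset T v).Nonempty := fun v hv => by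
    rw [← Finset.card_pos, card_terminalFinset]
    exact ((Set.Finite.mem_toFinset _).1 hv).2
  choose! c hc using hS
  refine ⟨S.biUnion fun v => (terminalFinset T v).erase (c v), ?_, ?_⟩
  · rw [Finset.card_biUnion]
    · refine Finset.sum_congr rfl fun v hv => ?_
      rw [Finset.card_erase_of_mem (hc v hv), card_terminalFinset]
    · refine fun v₁ _ v₂ _ hne => Finset.disjoint_left.2 fun u h₁ h₂ => hne ?_
      exact (mem_terminalFinset.1 (Finset.mem_of_mem_erase h₁)).unique
        (mem_terminalFinset.1 (Finset.mem_of_mem_erase h₂))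
  · refine isResolvingSet_of_isTerminalOf hT hmaj fun v u₁ u₂ hne h₁ h₂ => ?_
    have hv : v ∈ S := (Set.Finite.mem_toFinset _).2 h₁.isExteriorMajor
    have hmem : ∀ {u}, IsTerminalOf T u v → u ≠ c v →
        u ∈ (↑(S.biUnion fun v => (terminalFinset T v).erase (c v)) : Set V) := fun h hu =>
      Finset.mem_biUnion.2 ⟨v, hv, Finset.mem_erase.2 ⟨hu, mem_terminalFinset.2 h⟩⟩
    by_cases hc₁ : u₁ = c v
    · exact .inr (hmem h₂ (hc₁ ▸ hne.symm))
    · exact .inl (hmem h₁ hc₁)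

end MetricDimension

/-- For a tree `T` that is not a path, `β(T) = Σ_{v exterior major} (ter v - 1)`. -/
theorem tree_metricDim_formula {V : Type*} [Fintype V] (T : SimpleGraph V)
    (hT : T.IsTree) (hnp : ∀ n : ℕ, IsEmpty (T ≃g pathGraph n)) :
    metricDim T =
      ∑ v ∈ (Set.toFinite {v | IsExteriorMajor T v}).toFinset, (ter T v - 1) := by
  obtain ⟨W, hcard, hW⟩ := exists_isResolvingSet_card_eq hT (exists_isMajor hT hnp)
  refine le_antisymm (hcard ▸ Nat.sInf_le ⟨W, rfl, hW⟩) (le_csInf ⟨_, W, rfl, hW⟩ ?_)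
  rintro n ⟨W', rfl, hW'⟩
  exact sum_ter_sub_one_le_card hT hW'
end

section
/- For every tree T of order n ≥ 1, the threshold dimension τ(T) is at most g(n), where g(n) is the least nonnegative integer d with 2^d + d ≥ n. -/
open SimpleGraph

/-- `gfun n` is the least nonnegative integer `d` with `2 ^ d + d ≥ n`. -/
noncomputable def gfun (n : ℕ) : ℕ := sInf {d | n ≤ 2 ^ d + d}

/-!
Root the tree at `r` and let `W` consist of `g(n)` vertices farthest from `r`. A vertex of `W`
has at most one neighbour that is not farther from `r` (its parent), and every vertex outside `W`
is at most as far as any vertex of `W`; hence distinct vertices outside `W` have disjoint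
`W`-neighbourhoods, and the nonempty ones are distinct. There are `n - g(n) ≤ 2 ^ g(n)` vertices
outside `W`, so these neighbourhoods extend to an injective choice of subsets of `W`. Joining every
vertex outside `W` to all of its subset gives a spanning supergraph resolved by `W`: a vertex
outside `W` is at distance `1` from exactly the vertices of its subset.
-/

theorem Set.InjOn.exists_injective_extend {α β : Type*} [Fintype α] [DecidableEq β]
    {t : Finset β} (hcard : Fintype.card α ≤ t.card) {s : Set α} {f : α → β}
    (hfst : s.MapsTo f t) (hfs : s.InjOn f) :
    ∃ g : α → β, Function.Injective g ∧ (∀ i, g i ∈ t) ∧ s.EqOn g f := by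
  classical
  obtain ⟨u, hfu, hut, hu⟩ := Finset.exists_subsuperset_card_eq
    (s := s.toFinset.image f) (Finset.image_subset_iff.2 fun x hx => hfst (Set.mem_toFinset.1 hx))
    (Finset.card_image_le.trans (Finset.card_le_univ _)) hcard
  obtain ⟨e, he⟩ := Set.MapsTo.exists_equiv_extend_of_card_eq hu.symm
    (fun i hi => hfu (Finset.mem_image_of_mem f (Set.mem_toFinset.2 hi))) hfs
  exact ⟨fun i => e i, Subtype.val_injective.comp e.injective, fun i => hut (e i).2, he⟩

theorem Finset.exists_card_eq_forall_le_of_notMem {α β : Type*} [Fintype α] [LinearOrder β]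
    (f : α → β) {d : ℕ} (hd : d ≤ Fintype.card α) :
    ∃ W : Finset α, W.card = d ∧ ∀ v ∉ W, ∀ w ∈ W, f v ≤ f w := by
  classical
  induction d with
  | zero => exact ⟨∅, rfl, by simp⟩
  | succ d ih =>
    obtain ⟨W, hWcard, hW⟩ := ih (by omega)
    obtain ⟨m, hm, hmax⟩ := Wᶜ.exists_max_image f
      (Finset.card_pos.1 (by rw [Finset.card_compl]; omega))
    refine ⟨insert m W, by rw [Finset.card_insert_of_notMem (Finset.mem_compl.1 hm), hWcard], ?_⟩
    intro v hv w hw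
    rw [Finset.mem_insert, not_or] at hv
    rcases Finset.mem_insert.1 hw with rfl | hw
    · exact hmax v (Finset.mem_compl.2 hv.2)
    · exact hW v hv.2 w hw

namespace SimpleGraph

variable {V : Type*} {G : SimpleGraph V}

theorem IsTree.eq_penultimate_of_adj_of_dist_le (hG : G.IsTree) {r w u : V} {p : G.Walk r w}
    (hp : p.IsPath) (hadj : G.Adj w u) (hd : G.dist r u ≤ G.dist r w) : u = p.penultimate := by
  classical
  have hlt : G.dist r u < G.dist r w := by
    have := hG.dist_eq_dist_add_one_of_adj r hadj
    omega
  obtain ⟨q, hq, hql⟩ := hG.connected.exists_path_of_dist r u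
  have hw : w ∉ q.support := fun hw => by
    have := (dist_le (q.takeUntil w hw)).trans (q.length_takeUntil_le_length hw)
    omega
  exact hG.isAcyclic.eq_penultimate_of_adj_end hp hadj
    (hG.isAcyclic.mem_support_of_ne_mem_support_of_adj_of_isPath hp hq hadj hw)

theorem IsTree.eq_of_adj_of_dist_le (hG : G.IsTree) (r : V) {w u₁ u₂ : V} (h₁ : G.Adj w u₁)
    (h₂ : G.Adj w u₂) (hd₁ : G.dist r u₁ ≤ G.dist r w) (hd₂ : G.dist r u₂ ≤ G.dist r w) :
    u₁ = u₂ := by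
  obtain ⟨p, hp⟩ := hG.connected.exists_isPath r w
  rw [hG.eq_penultimate_of_adj_of_dist_le hp h₁ hd₁, hG.eq_penultimate_of_adj_of_dist_le hp h₂ hd₂]

theorem IsTree.exists_injective_adj_subset [Fintype V] (hG : G.IsTree) {r : V} {W : Finset V}
    (hfar : ∀ v ∉ W, ∀ w ∈ W, G.dist r v ≤ G.dist r w)
    (hcard : Fintype.card V - W.card ≤ 2 ^ W.card) :
    ∃ S : {v // v ∉ W} → Finset V, Function.Injective S ∧ (∀ v, S v ⊆ W) ∧
      ∀ v : {v // v ∉ W}, ∀ w ∈ W, G.Adj w v → w ∈ S v := by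
  classical
  let F : {v // v ∉ W} → Finset V := fun v => {w ∈ W | G.Adj w v}
  have hF : {v | (F v).Nonempty}.InjOn F := by
    rintro v₁ ⟨w, hw⟩ v₂ - h
    have hw₂ : w ∈ F v₂ := h ▸ hw
    simp only [F, Finset.mem_filter] at hw hw₂
    exact Subtype.ext <| hG.eq_of_adj_of_dist_le r hw.2 hw₂.2 (hfar _ v₁.2 w hw.1)
      (hfar _ v₂.2 w hw.1)
  obtain ⟨S, hS, hSW, hSF⟩ := hF.exists_injective_extend (t := W.powerset)
    (by simpa using hcard) (fun v _ => Finset.mem_powerset.2 (Finset.filter_subset _ _))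
  refine ⟨S, hS, fun v => Finset.mem_powerset.1 (hSW v), fun v w hw hadj => ?_⟩
  have hwF : w ∈ F v := Finset.mem_filter.2 ⟨hw, hadj⟩
  exact hSF ⟨w, hwF⟩ ▸ hwF

theorem Connected.isResolvingSet_of_adj (hG : G.Connected) {W : Set V}
    (h : ∀ u ∉ W, ∀ v ∉ W, (∀ w ∈ W, G.Adj w u ↔ G.Adj w v) → u = v) :
    IsResolvingSet G W := by
  intro u v huv
  by_cases hu : u ∈ W
  · exact hG.dist_eq_zero_iff.1 ((huv u hu).symm.trans G.dist_self)
  by_cases hv : v ∈ W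
  · exact (hG.dist_eq_zero_iff.1 ((huv v hv).trans G.dist_self)).symm
  refine h u hu v hv fun w hw => ?_
  rw [← dist_eq_one_iff_adj, ← dist_eq_one_iff_adj, huv w hw]

theorem Connected.exists_le_isResolvingSet (hG : G.Connected) {W : Finset V}
    (S : {v // v ∉ W} → Finset V) (hS : Function.Injective S) (hSW : ∀ v, S v ⊆ W)
    (hGS : ∀ v : {v // v ∉ W}, ∀ w ∈ W, G.Adj w v → w ∈ S v) :
    ∃ H, G ≤ H ∧ IsResolvingSet H W := by
  let H := G ⊔ fromRel fun w v => ∃ hv : v ∉ W, w ∈ S ⟨v, hv⟩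
  have hadj : ∀ v : {v // v ∉ W}, ∀ w ∈ W, H.Adj w v ↔ w ∈ S v := by
    rintro ⟨v, hv⟩ w hw
    simp only [H, sup_adj, fromRel_adj]
    constructor
    · rintro (h | ⟨-, ⟨_, h⟩ | ⟨hw', -⟩⟩)
      · exact hGS _ w hw h
      · exact h
      · exact absurd hw hw'
    · exact fun h => Or.inr ⟨fun e => hv (e ▸ hw), Or.inl ⟨hv, h⟩⟩
  refine ⟨H, le_sup_left, (hG.mono le_sup_left).isResolvingSet_of_adj fun u hu v hv huv => ?_⟩
  refine congrArg Subtype.val (@hS ⟨u, hu⟩ ⟨v, hv⟩ (Finset.ext fun w => ?_))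
  by_cases hw : w ∈ W
  · rw [← hadj _ w hw, ← hadj _ w hw]
    exact huv w hw
  · exact iff_of_false (fun h => hw (hSW _ h)) (fun h => hw (hSW _ h))

theorem thresholdDim_le_card [Fintype V] {H : SimpleGraph V} (hGH : G ≤ H) {W : Finset V}
    (hW : IsResolvingSet H W) : thresholdDim G ≤ W.card :=
  (Nat.sInf_le ⟨H, hGH, rfl⟩ : thresholdDim G ≤ metricDim H).trans (Nat.sInf_le ⟨W, rfl, hW⟩)

end SimpleGraph

theorem le_two_pow_gfun_add (n : ℕ) : n ≤ 2 ^ gfun n + gfun n :=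
  Nat.sInf_mem (s := {d | n ≤ 2 ^ d + d}) ⟨n, Nat.le_add_left n _⟩

theorem gfun_le_self (n : ℕ) : gfun n ≤ n :=
  Nat.sInf_le (Nat.le_add_left n _)

theorem tree_thresholdDim_le_general {V : Type*} [Fintype V] (T : SimpleGraph V) (hT : T.IsTree)
    (n : ℕ) (hcard : Fintype.card V = n) :
    thresholdDim T ≤ gfun n := by
  subst hcard
  obtain ⟨r⟩ := hT.connected.nonempty
  obtain ⟨W, hWcard, hfar⟩ :=
    Finset.exists_card_eq_forall_le_of_notMem (T.dist r) (gfun_le_self _)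
  obtain ⟨S, hS, hSW, hTS⟩ := hT.exists_injective_adj_subset hfar
    (hWcard ▸ Nat.sub_le_iff_le_add.2 (le_two_pow_gfun_add _))
  obtain ⟨H, hTH, hW⟩ := hT.connected.exists_le_isResolvingSet S hS hSW hTS
  exact (thresholdDim_le_card hTH hW).trans hWcard.le

/-- For every tree of order `n ≥ 1`, `τ(T) ≤ g(n)`. -/
theorem tree_thresholdDim_le {V : Type*} [Fintype V] (T : SimpleGraph V) (hT : T.IsTree)
    (n : ℕ) (hn : 1 ≤ n) (hcard : Fintype.card V = n) :
    thresholdDim T ≤ gfun n :=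
  tree_thresholdDim_le_general T hT n hcard
end

section
/- The star K_{1,6} has metric dimension 5 and threshold dimension 3; in particular, no graph of order 7 and diameter 2 has metric dimension 2. -/
open SimpleGraph

/-!
Two leaves of the star `K_{1,n}` are twins (every other vertex is equidistant from them), so a
resolving set misses at most one leaf, while all leaves but one do resolve: the metric dimension
is `n - 1`. In a connected graph with all distances at most `2`, a vertex other than `a, b` has
its distance vector to `{a, b}` in `{1, 2}²`, so a resolving pair forces at most `6` vertices.
Every spanning supergraph of `K_{1,6}` keeps the centre adjacent to all other vertices, hence has
diameter at most `2` and metric dimension at least `3`; the wheel `K_1 + C_6` attains `3`.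
-/

open Finset Sum

section MetricDimension

variable {V : Type*} {G : SimpleGraph V}

theorem IsResolvingSet.mono {W W' : Set V} (h : IsResolvingSet G W) (hWW' : W ⊆ W') :
    IsResolvingSet G W' :=
  fun u v huv => h u v fun w hw => huv w (hWW' hw)

theorem IsResolvingSet.mem_or_mem {W : Set V} (h : IsResolvingSet G W) {u v : V} (huv : u ≠ v)
    (htwins : ∀ w, w ≠ u → w ≠ v → G.dist w u = G.dist w v) : u ∈ W ∨ v ∈ W := by
  by_contra! hW
  exact huv <| h u v fun w hw => htwins w (ne_of_mem_of_not_mem hw hW.1)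
    (ne_of_mem_of_not_mem hw hW.2)

theorem isResolvingSet_univ (hG : G.Connected) : IsResolvingSet G Set.univ :=
  fun u v h => hG.dist_eq_zero_iff.1 <| by simpa using (h u trivial).symm

variable [Fintype V]

theorem metricDim_le {W : Finset V} (h : IsResolvingSet G W) : metricDim G ≤ #W :=
  Nat.sInf_le ⟨W, rfl, h⟩

theorem exists_isResolvingSet_card_eq_metricDim (hG : G.Connected) :
    ∃ W : Finset V, #W = metricDim G ∧ IsResolvingSet G W :=
  Nat.sInf_mem (s := {n | ∃ W : Finset V, #W = n ∧ IsResolvingSet G W})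
    ⟨_, univ, rfl, by simpa using isResolvingSet_univ hG⟩

theorem card_le_six_of_isResolvingSet_pair (hG : G.Connected) (hdist : ∀ u v, G.dist u v ≤ 2)
    {a b : V} (h : IsResolvingSet G {a, b}) : Fintype.card V ≤ 6 := by
  classical
  let T : Finset (ℕ × ℕ) := {(0, G.dist a b), (G.dist a b, 0), (1, 1), (1, 2), (2, 1), (2, 2)}
  have hmaps : ∀ v, (G.dist a v, G.dist b v) ∈ T := by
    intro v
    by_cases hva : a = v
    · subst hva; simp [T, dist_comm]
    by_cases hvb : b = v
    · subst hvb; simp [T]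
    have ha := hG.pos_dist_of_ne hva
    have hb := hG.pos_dist_of_ne hvb
    have ha' := hdist a v
    have hb' := hdist b v
    interval_cases G.dist a v <;> interval_cases G.dist b v <;> simp [T]
  have hinj : Set.InjOn (fun v => (G.dist a v, G.dist b v)) (univ : Finset V) :=
    fun u _ v _ huv => h u v <| by
      simp only [Prod.mk.injEq] at huv
      rintro w (rfl | rfl) <;> simp [huv]
  calc Fintype.card V = #(univ : Finset V) := card_univ.symm
    _ ≤ #T := card_le_card_of_injOn _ (fun v _ => hmaps v) hinj
    _ ≤ 6 := card_le_six

theorem three_le_metricDim (hG : G.Connected) (hdist : ∀ u v, G.dist u v ≤ 2)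
    (hcard : 6 < Fintype.card V) : 3 ≤ metricDim G := by
  classical
  obtain ⟨W, hWcard, hW⟩ := exists_isResolvingSet_card_eq_metricDim hG
  by_contra! hlt
  obtain ⟨W', hWW', -, hW'card⟩ := exists_subsuperset_card_eq (subset_univ W)
    (show #W ≤ 2 by omega) (by rw [card_univ]; omega)
  obtain ⟨a, b, -, rfl⟩ := card_eq_two.1 hW'card
  have := card_le_six_of_isResolvingSet_pair hG hdist
    (by simpa using hW.mono (coe_subset.2 hWW'))
  omega

end MetricDimension

namespace SimpleGraph

section UniversalVertex

variable {V : Type*} {G : SimpleGraph V} {c : V}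

theorem connected_of_forall_adj (hc : ∀ v, v ≠ c → G.Adj c v) : G.Connected := by
  refine G.connected_iff_exists_forall_reachable.2 ⟨c, fun v => ?_⟩
  by_cases hv : v = c
  · exact hv ▸ Reachable.rfl
  · exact (hc v hv).reachable

theorem dist_eq_of_forall_adj [DecidableEq V] [DecidableRel G.Adj]
    (hc : ∀ v, v ≠ c → G.Adj c v) (u v : V) :
    G.dist u v = if u = v then 0 else if G.Adj u v then 1 else 2 := by
  split_ifs with huv hadj
  · rw [huv, dist_self]
  · exact dist_eq_one_iff_adj.2 hadj
  · have huc : u ≠ c := by rintro rfl; exact hadj (hc v (Ne.symm huv))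
    have hvc : v ≠ c := by rintro rfl; exact hadj (hc u huc).symm
    refine le_antisymm ?_ ((connected_of_forall_adj hc).one_lt_dist_of_ne_of_not_adj huv hadj)
    exact dist_le ((Walk.nil.cons (hc v hvc)).cons (hc u huc).symm)

theorem dist_le_two_of_forall_adj (hc : ∀ v, v ≠ c → G.Adj c v) (u v : V) :
    G.dist u v ≤ 2 := by
  classical
  rw [dist_eq_of_forall_adj hc]
  split_ifs <;> omega

end UniversalVertex

end SimpleGraph

instance {V W : Type*} : DecidableRel (completeBipartiteGraph V W).Adj :=
  fun v w => inferInstanceAs (Decidable (v.isLeft ∧ w.isRight ∨ v.isRight ∧ w.isLeft))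

section Star

variable {n : ℕ}

theorem completeBipartiteGraph_fin_one_adj_inl {v : Fin 1 ⊕ Fin n} (hv : v ≠ inl 0) :
    (completeBipartiteGraph (Fin 1) (Fin n)).Adj (inl 0) v := by
  rcases v with i | i
  · exact absurd (congrArg inl (Subsingleton.elim i 0)) hv
  · simp

theorem completeBipartiteGraph_fin_one_dist_inl_inr (a : Fin 1) (i : Fin n) :
    (completeBipartiteGraph (Fin 1) (Fin n)).dist (inl a) (inr i) = 1 :=
  dist_eq_one_iff_adj.2 (by simp)

theorem completeBipartiteGraph_fin_one_dist_inr_inl (i : Fin n) (a : Fin 1) :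
    (completeBipartiteGraph (Fin 1) (Fin n)).dist (inr i) (inl a) = 1 :=
  dist_eq_one_iff_adj.2 (by simp)

theorem completeBipartiteGraph_fin_one_dist_inr_inr (i i' : Fin n) :
    (completeBipartiteGraph (Fin 1) (Fin n)).dist (inr i) (inr i') = if i = i' then 0 else 2 := by
  simp [dist_eq_of_forall_adj fun _ => completeBipartiteGraph_fin_one_adj_inl]

theorem le_card_of_isResolvingSet_completeBipartiteGraph_fin_one {W : Finset (Fin 1 ⊕ Fin n)}
    (hW : IsResolvingSet (completeBipartiteGraph (Fin 1) (Fin n)) W) : n - 1 ≤ #W := by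
  classical
  have htwins (i j : Fin n) (w : Fin 1 ⊕ Fin n) (hi : w ≠ inr i) (hj : w ≠ inr j) :
      (completeBipartiteGraph (Fin 1) (Fin n)).dist w (inr i) =
        (completeBipartiteGraph (Fin 1) (Fin n)).dist w (inr j) := by
    rcases w with a | k
    · simp only [completeBipartiteGraph_fin_one_dist_inl_inr]
    · simp_all [completeBipartiteGraph_fin_one_dist_inr_inr]
  have hout : #{i | inr i ∉ W} ≤ 1 := card_le_one.2 fun i hi j hj => by
    by_contra hij
    simp only [mem_filter, mem_univ, true_and] at hi hj
    rcases hW.mem_or_mem (inr_injective.ne hij) (htwins i j) with h | h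
    exacts [hi h, hj h]
  have hin : #{i | inr i ∈ W} ≤ #W :=
    card_le_card_of_injOn inr (fun i hi => by simpa using hi) inr_injective.injOn
  have := card_filter_add_card_filter_not (s := univ) fun i : Fin n => inr i ∈ W
  simp only [card_univ, Fintype.card_fin] at this
  omega

theorem isResolvingSet_completeBipartiteGraph_fin_one {j k : Fin n} (hjk : j ≠ k) :
    IsResolvingSet (completeBipartiteGraph (Fin 1) (Fin n))
      ((univ.erase j).map .inr : Finset (Fin 1 ⊕ Fin n)) := by
  intro u v h
  have h' (i : Fin n) (hi : i ≠ j) := h (inr i) (by simpa using hi)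
  rcases u with a | i <;> rcases v with b | i'
  · rw [Subsingleton.elim a b]
  · have := h' k hjk.symm
    simp only [completeBipartiteGraph_fin_one_dist_inr_inl,
      completeBipartiteGraph_fin_one_dist_inr_inr] at this
    split_ifs at this
    omega
  · have := h' k hjk.symm
    simp only [completeBipartiteGraph_fin_one_dist_inr_inl,
      completeBipartiteGraph_fin_one_dist_inr_inr] at this
    split_ifs at this
    omega
  · by_contra hne
    have hii' : i ≠ i' := fun h => hne (h ▸ rfl)
    obtain ⟨l, hl, hl'⟩ : ∃ l, l ≠ j ∧ (l = i ∨ l = i') := by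
      by_cases hi : i = j
      exacts [⟨i', hi ▸ hii'.symm, Or.inr rfl⟩, ⟨i, hi, Or.inl rfl⟩]
    have := h' l hl
    rcases hl' with rfl | rfl <;>
      simp [completeBipartiteGraph_fin_one_dist_inr_inr, hii', hii'.symm] at this

theorem metricDim_completeBipartiteGraph_fin_one (hn : 2 ≤ n) :
    metricDim (completeBipartiteGraph (Fin 1) (Fin n)) = n - 1 := by
  refine le_antisymm ?_ ?_
  · have hW := isResolvingSet_completeBipartiteGraph_fin_one
      (j := (⟨0, by omega⟩ : Fin n)) (k := ⟨1, hn⟩) (by simp)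
    simpa using metricDim_le hW
  · obtain ⟨W, hWcard, hW⟩ := exists_isResolvingSet_card_eq_metricDim
      (connected_of_forall_adj fun _ => completeBipartiteGraph_fin_one_adj_inl)
    exact hWcard ▸ le_card_of_isResolvingSet_completeBipartiteGraph_fin_one hW

end Star

section Threshold

variable {V : Type*} [Fintype V]

theorem thresholdDim_le_metricDim {G H : SimpleGraph V} (hGH : G ≤ H) :
    thresholdDim G ≤ metricDim H :=
  Nat.sInf_le ⟨H, hGH, rfl⟩

theorem three_le_metricDim_of_completeBipartiteGraph_fin_one_le {n : ℕ} (hn : 6 ≤ n)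
    {H : SimpleGraph (Fin 1 ⊕ Fin n)} (hH : completeBipartiteGraph (Fin 1) (Fin n) ≤ H) :
    3 ≤ metricDim H := by
  have hc (v : Fin 1 ⊕ Fin n) (hv : v ≠ inl 0) : H.Adj (inl 0) v :=
    hH (completeBipartiteGraph_fin_one_adj_inl hv)
  exact three_le_metricDim (connected_of_forall_adj hc) (dist_le_two_of_forall_adj hc)
    (by simp; omega)

theorem three_le_thresholdDim_completeBipartiteGraph_fin_one {n : ℕ} (hn : 6 ≤ n) :
    3 ≤ thresholdDim (completeBipartiteGraph (Fin 1) (Fin n)) := by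
  refine le_csInf ⟨_, _, le_rfl, rfl⟩ ?_
  rintro _ ⟨H, hH, rfl⟩
  exact three_le_metricDim_of_completeBipartiteGraph_fin_one_le hn hH

end Threshold

instance {V W : Type*} {G : SimpleGraph V} {H : SimpleGraph W} [DecidableRel G.Adj]
    [DecidableRel H.Adj] : DecidableRel (G ⊕g H).Adj
  | .inl u, .inl v => inferInstanceAs (Decidable (G.Adj u v))
  | .inr u, .inr v => inferInstanceAs (Decidable (H.Adj u v))
  | .inl _, .inr _ | .inr _, .inl _ => inferInstanceAs (Decidable (false = true))

def wheelGraph (n : ℕ) : SimpleGraph (Fin 1 ⊕ Fin n) :=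
  completeBipartiteGraph (Fin 1) (Fin n) ⊔ (⊥ ⊕g cycleGraph n)

instance (n : ℕ) : DecidableRel (wheelGraph n).Adj :=
  inferInstanceAs <|
    DecidableRel (completeBipartiteGraph (Fin 1) (Fin n) ⊔ (⊥ ⊕g cycleGraph n)).Adj

/-- The rim vertices `2, 4, 5` are adjacent to the pairs `{1, 3}, {3}, {0}` of landmarks, and the
hub to all three, so all seven distance vectors differ. -/
theorem isResolvingSet_wheelGraph_six :
    IsResolvingSet (wheelGraph 6) ({inr 0, inr 1, inr 3} : Finset (Fin 1 ⊕ Fin 6)) := by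
  have hc (v : Fin 1 ⊕ Fin 6) (hv : v ≠ inl 0) : (wheelGraph 6).Adj (inl 0) v :=
    Or.inl (completeBipartiteGraph_fin_one_adj_inl hv)
  unfold IsResolvingSet
  simp only [dist_eq_of_forall_adj hc, coe_insert, coe_singleton, Set.mem_insert_iff,
    Set.mem_singleton_iff, forall_eq_or_imp, forall_eq]
  decide

/-- `K_{1,6}` has metric dimension `5` and threshold dimension `3`; in particular no
connected graph of order `7` and diameter `2` has metric dimension `2`. -/
theorem star6 :
    metricDim (completeBipartiteGraph (Fin 1) (Fin 6)) = 5 ∧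
    thresholdDim (completeBipartiteGraph (Fin 1) (Fin 6)) = 3 ∧
    ∀ (V : Type) [Fintype V] (H : SimpleGraph V), Fintype.card V = 7 →
      H.Connected → H.diam = 2 → metricDim H ≠ 2 := by
  refine ⟨metricDim_completeBipartiteGraph_fin_one (by norm_num), le_antisymm ?_
    (three_le_thresholdDim_completeBipartiteGraph_fin_one le_rfl), ?_⟩
  · calc thresholdDim (completeBipartiteGraph (Fin 1) (Fin 6))
        ≤ metricDim (wheelGraph 6) := thresholdDim_le_metricDim le_sup_left
      _ ≤ 3 := metricDim_le isResolvingSet_wheelGraph_six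
  · intro V _ H hcard hconn hdiam
    have hdist (u v : V) : H.dist u v ≤ 2 :=
      hdiam ▸ dist_le_diam (ediam_ne_top_of_diam_ne_zero (by omega))
    have := three_le_metricDim hconn hdist (by omega)
    omega
end
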